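/- arXiv:2506.09515 — 8 statements merged into one kernel-verified Lean document; each statement's English description precedes it below -/
import Mathlib

section
/- Let r ≥ 2 and 0 ≤ d < r be integers with d+1 ≤ r/2, and let Δ be a positive integer. Then there exists an r-partite graph G with parts of size Δ and maximum degree at most Δ whose largest independent partial transversal has size at most r − (d+1). (Hence n(r, d+1, Δ) ≥ Δ.) -/
/-! Pair the parts as `{0, 1}, {2, 3}, …` and join every vertex of a part to every vertex of
the other part of its pair, giving `⌊r/2⌋` copies of `K_{Δ,Δ}` (and an isolated part when
`r` is odd). Every degree is `Δ`, and an independent partial transversal meets each pair of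
parts at most once, so it has at most `⌈r/2⌉ ≤ r - (d + 1)` vertices. -/

namespace SimpleGraph

variable {ι κ α : Type*}

def sameFiber (f : ι → κ) : SimpleGraph ι where
  Adj i j := i ≠ j ∧ f i = f j
  symm := ⟨fun _ _ h => ⟨h.1.symm, h.2.symm⟩⟩
  loopless := ⟨fun _ h => h.1 rfl⟩

@[simp]
theorem sameFiber_adj {f : ι → κ} {i j : ι} : (sameFiber f).Adj i j ↔ i ≠ j ∧ f i = f j :=
  Iff.rfl

theorem neighborSet_sameFiber (f : ι → κ) (i : ι) :
    (sameFiber f).neighborSet i = f ⁻¹' {f i} \ {i} := by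
  ext j
  simp [eq_comm, and_comm]

theorem ncard_neighborSet_comap_fst (H : SimpleGraph ι) (v : ι × α) :
    ((H.comap Prod.fst).neighborSet v).ncard = (H.neighborSet v.1).ncard * Nat.card α := by
  have : (H.comap Prod.fst).neighborSet v = H.neighborSet v.1 ×ˢ Set.univ := by
    ext w
    simp
  rw [this, Set.ncard_prod, Set.ncard_univ]

theorem injOn_comp_fst_of_isIndep_comap_fst {f : ι → κ} {S : Set (ι × α)}
    (hS : ∀ x ∈ S, ∀ y ∈ S, ¬ ((sameFiber f).comap Prod.fst).Adj x y)
    (hinj : S.InjOn Prod.fst) : S.InjOn (f ∘ Prod.fst) := by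
  intro x hx y hy hxy
  by_cases hfst : x.1 = y.1
  · exact hinj hx hy hfst
  · exact absurd (sameFiber_adj.2 ⟨hfst, hxy⟩) (hS x hx y hy)

end SimpleGraph

theorem Set.ncard_fst_preimage_singleton {ι α : Type*} (i : ι) :
    {v : ι × α | v.1 = i}.ncard = Nat.card α := by
  have : {v : ι × α | v.1 = i} = {i} ×ˢ Set.univ := by
    ext v
    simp
  rw [this, Set.ncard_prod, Set.ncard_singleton, Set.ncard_univ, one_mul]

def pairIndex (r : ℕ) (i : Fin r) : Fin ((r + 1) / 2) :=
  ⟨i / 2, by omega⟩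

theorem ncard_neighborSet_sameFiber_pairIndex_le_one {r : ℕ} (i : Fin r) :
    ((SimpleGraph.sameFiber (pairIndex r)).neighborSet i).ncard ≤ 1 := by
  rw [SimpleGraph.neighborSet_sameFiber, Set.ncard_le_one_iff]
  intro j j' hj hj'
  simp only [Set.mem_sdiff, Set.mem_preimage, Set.mem_singleton_iff, pairIndex,
    Fin.ext_iff] at hj hj'
  omega

open SimpleGraph in
theorem stmt2_general (r d Δ : ℕ) (hd2 : 2 * (d + 1) ≤ r) :
    ∃ (V : Type) (_ : Fintype V) (G : SimpleGraph V) (part : V → Fin r),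
      (∀ i : Fin r, ({v | part v = i} : Set V).ncard = Δ) ∧
      (∀ v w, G.Adj v w → part v ≠ part w) ∧
      (∀ v, (G.neighborSet v).ncard ≤ Δ) ∧
      (∀ S : Finset V, (∀ x ∈ S, ∀ y ∈ S, ¬ G.Adj x y) → Set.InjOn part ↑S →
        S.card ≤ r - (d + 1)) := by
  -- `sameFiber (pairIndex r)` matches part `2k` with part `2k + 1`; pulling it back along
  -- `Prod.fst` turns each matching edge into a copy of `K_{Δ,Δ}`.
  refine ⟨Fin r × Fin Δ, inferInstance, (sameFiber (pairIndex r)).comap Prod.fst, Prod.fst,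
    fun i => by simpa using Set.ncard_fst_preimage_singleton (α := Fin Δ) i,
    fun v w h => (sameFiber _).ne_of_adj h, fun v => ?_, fun S hS hinj => ?_⟩
  · calc _ = ((sameFiber (pairIndex r)).neighborSet v.1).ncard * Δ := by
          simp [ncard_neighborSet_comap_fst]
      _ ≤ 1 * Δ := Nat.mul_le_mul_right _ (ncard_neighborSet_sameFiber_pairIndex_le_one v.1)
      _ = Δ := one_mul Δ
  · have hcard : S.card ≤ (r + 1) / 2 := by
      simpa using Finset.card_le_card_of_injOn (t := Finset.univ) _ (fun _ _ => Finset.mem_univ _)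
        (injOn_comp_fst_of_isIndep_comap_fst hS hinj)
    omega

/-- For r ≥ 2, 0 ≤ d < r with d+1 ≤ r/2 and Δ ≥ 1 there is an r-partite graph with
parts of size Δ, maximum degree at most Δ, whose largest independent partial
transversal has size at most r − (d+1). -/
theorem stmt2 (r d Δ : ℕ) (hr : 2 ≤ r) (hd : d < r) (hd2 : 2 * (d + 1) ≤ r) (hΔ : 0 < Δ) :
    ∃ (V : Type) (_ : Fintype V) (G : SimpleGraph V) (part : V → Fin r),
      (∀ i : Fin r, ({v | part v = i} : Set V).ncard = Δ) ∧
      (∀ v w, G.Adj v w → part v ≠ part w) ∧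
      (∀ v, (G.neighborSet v).ncard ≤ Δ) ∧
      (∀ S : Finset V, (∀ x ∈ S, ∀ y ∈ S, ¬ G.Adj x y) → Set.InjOn part ↑S →
        S.card ≤ r - (d + 1)) :=
  stmt2_general r d Δ hd2
end

section
/- The disjoint union of ⌊r/2⌋ copies of K_{Δ,Δ}, with the two sides of each copy placed in two distinct parts (and, if r is odd, one additional part consisting of Δ isolated vertices), is an r-partite graph with maximum degree Δ whose maximum independent transversal (independent set with at most one vertex per part) has size exactly ⌈r/2⌉. -/
/-!
Parts `i ≠ j` are completely joined exactly when `⌊i/2⌋ = ⌊j/2⌋`, so a vertex sees precisely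
the `Δ` vertices of its partner part (if any). An independent transversal cannot meet both parts
of a pair, hence `i ↦ ⌊i/2⌋` is injective on it and it has at most `⌈r/2⌉` vertices; one vertex
from each even-indexed part attains this.
-/

open Function

namespace SimpleGraph

variable {ι κ V : Type*}

def fiberMultipartite (f : ι → κ) (V : Type*) : SimpleGraph (ι × V) :=
  fromRel fun x y => x.1 ≠ y.1 ∧ f x.1 = f y.1

variable {f : ι → κ}

theorem fiberMultipartite_adj {x y : ι × V} :
    (fiberMultipartite f V).Adj x y ↔ x.1 ≠ y.1 ∧ f x.1 = f y.1 := by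
  simp only [fiberMultipartite, fromRel_adj]
  constructor
  · rintro ⟨-, h | ⟨hne, heq⟩⟩
    exacts [h, ⟨hne.symm, heq.symm⟩]
  · rintro ⟨hne, heq⟩
    exact ⟨fun h => hne (congrArg Prod.fst h), .inl ⟨hne, heq⟩⟩

theorem neighborSet_fiberMultipartite (x : ι × V) :
    (fiberMultipartite f V).neighborSet x = (f ⁻¹' {f x.1} \ {x.1}) ×ˢ Set.univ := by
  ext y
  simp [fiberMultipartite_adj, and_comm, eq_comm]

theorem ncard_neighborSet_fiberMultipartite (x : ι × V) :
    ((fiberMultipartite f V).neighborSet x).ncard =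
      (f ⁻¹' {f x.1} \ {x.1}).ncard * Nat.card V := by
  rw [neighborSet_fiberMultipartite, Set.ncard_prod, Set.ncard_univ]

theorem card_le_of_indep_of_injOn_fst [Fintype κ] (S : Finset (ι × V))
    (hS : ∀ x ∈ S, ∀ y ∈ S, ¬ (fiberMultipartite f V).Adj x y)
    (hfst : Set.InjOn Prod.fst (S : Set (ι × V))) : S.card ≤ Fintype.card κ := by
  have hinj : Set.InjOn (f ∘ Prod.fst) (S : Set (ι × V)) := by
    intro x hx y hy hxy
    by_contra hne
    exact hS x hx y hy (fiberMultipartite_adj.2 ⟨fun h => hne (hfst hx hy h), hxy⟩)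
  simpa using Finset.card_le_card_of_injOn _ (fun _ _ => Finset.mem_univ _) hinj

theorem exists_indep_injOn_fst_card_eq [Fintype κ] [DecidableEq ι] [DecidableEq V]
    {g : κ → ι} (hg : LeftInverse f g) (v : V) :
    ∃ S : Finset (ι × V), (∀ x ∈ S, ∀ y ∈ S, ¬ (fiberMultipartite f V).Adj x y) ∧
      Set.InjOn Prod.fst (S : Set (ι × V)) ∧ S.card = Fintype.card κ := by
  refine ⟨Finset.univ.image fun k => (g k, v), ?_, ?_, ?_⟩
  · simp only [Finset.mem_image, Finset.mem_univ, true_and]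
    rintro _ ⟨k, rfl⟩ _ ⟨l, rfl⟩ hadj
    obtain ⟨hne, heq⟩ := fiberMultipartite_adj.1 hadj
    rw [hg k, hg l] at heq
    exact hne (congrArg g heq)
  · simp only [Finset.coe_image, Finset.coe_univ, Set.image_univ]
    rintro _ ⟨k, rfl⟩ _ ⟨l, rfl⟩ h
    exact Prod.ext h rfl
  · rw [Finset.card_image_of_injective _ fun k l h => hg.injective (congrArg Prod.fst h)]
    rfl

end SimpleGraph

def Fin.halve (r : ℕ) (i : Fin r) : Fin ((r + 1) / 2) :=
  ⟨i / 2, by omega⟩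

def Fin.double (r : ℕ) (k : Fin ((r + 1) / 2)) : Fin r :=
  ⟨2 * k, by omega⟩

theorem Fin.leftInverse_halve_double (r : ℕ) : LeftInverse (Fin.halve r) (Fin.double r) :=
  fun k => Fin.ext (by simp [Fin.halve, Fin.double])

theorem Fin.ncard_halve_fiber_diff_le_one {r : ℕ} (i : Fin r) :
    (Fin.halve r ⁻¹' {Fin.halve r i} \ {i}).ncard ≤ 1 := by
  refine (Set.ncard_le_one (Set.toFinite _)).2 fun j hj k hk => ?_
  simp only [Set.mem_sdiff, Set.mem_preimage, Set.mem_singleton_iff, Fin.halve,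
    Fin.ext_iff] at hj hk
  omega

theorem Fin.halve_fiber_zero_diff {r : ℕ} (hr : 2 ≤ r) :
    Fin.halve r ⁻¹' {Fin.halve r ⟨0, by omega⟩} \ {⟨0, by omega⟩} = {⟨1, hr⟩} := by
  ext j
  simp only [Set.mem_sdiff, Set.mem_preimage, Set.mem_singleton_iff, Fin.halve, Fin.ext_iff]
  omega

open SimpleGraph in
/-- The disjoint union of ⌊r/2⌋ copies of K_{Δ,Δ} (classes 2k, 2k+1 paired, plus an
isolated class if r is odd) is an r-partite graph with maximum degree Δ whose maximum
independent partial transversal has size exactly ⌈r/2⌉ = (r+1)/2. -/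
theorem stmt3 (r Δ : ℕ) (hr : 2 ≤ r) (hΔ : 0 < Δ) :
    let G : SimpleGraph (Fin r × Fin Δ) :=
      SimpleGraph.fromRel (fun x y => x.1 ≠ y.1 ∧ (x.1 : ℕ) / 2 = (y.1 : ℕ) / 2)
    (∀ v w, G.Adj v w → v.1 ≠ w.1) ∧
    (∀ v, (G.neighborSet v).ncard ≤ Δ) ∧
    (∃ v, (G.neighborSet v).ncard = Δ) ∧
    (∀ S : Finset (Fin r × Fin Δ), (∀ x ∈ S, ∀ y ∈ S, ¬ G.Adj x y) →
      Set.InjOn (Prod.fst : Fin r × Fin Δ → Fin r) ↑S → S.card ≤ (r + 1) / 2) ∧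
    (∃ S : Finset (Fin r × Fin Δ), (∀ x ∈ S, ∀ y ∈ S, ¬ G.Adj x y) ∧
      Set.InjOn (Prod.fst : Fin r × Fin Δ → Fin r) ↑S ∧ S.card = (r + 1) / 2) := by
  intro G
  have hG : G = fiberMultipartite (Fin.halve r) (Fin Δ) := by
    simp only [G, fiberMultipartite, Fin.halve, Fin.ext_iff]
  rw [hG]
  refine ⟨fun v w h => (fiberMultipartite_adj.1 h).1, fun v => ?_, ?_, fun S => ?_, ?_⟩
  · rw [ncard_neighborSet_fiberMultipartite, Nat.card_eq_fintype_card, Fintype.card_fin]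
    simpa using Nat.mul_le_mul_right Δ (Fin.ncard_halve_fiber_diff_le_one v.1)
  · refine ⟨(⟨0, by omega⟩, ⟨0, hΔ⟩), ?_⟩
    rw [ncard_neighborSet_fiberMultipartite, Fin.halve_fiber_zero_diff hr]
    simp
  · simpa using card_le_of_indep_of_injOn_fst (f := Fin.halve r) S
  · simpa using
      exists_indep_injOn_fst_card_eq (Fin.leftInverse_halve_double r) (⟨0, hΔ⟩ : Fin Δ)
end

section
/- With the setup of the previous counting (I of size at most 2(t−d−1) dominating t classes of size n each, max degree Δ): for any subset Y ⊆ I, the set of vertices in the t classes whose unique neighbor in I lies in Y has size at least (|Y| + 4d + 4 − 4t)Δ + 2tn. -/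
/-!
Let `U` be the union of the classes and `f x = |N(x) ∩ I|`. As `I` dominates `U`, every `x ∈ U`
has `2 ≤ f x + [f x = 1]`, so double counting the edges between `U` and `I` gives
`2|U| ≤ |I|Δ + #{x ∈ U | f x = 1}`. A vertex with `f x = 1` either has its neighbour in `Y`, or is
one of the at most `|I \ Y|Δ` neighbours of `I \ Y`. Now use `|U| ≥ tn` and `|I| ≤ 2(t − d − 1)`.
-/

open Finset

lemma two_mul_card_le_sum_add_card_filter_eq_one {α : Type*} (s : Finset α) (f : α → ℕ)
    (hf : ∀ x ∈ s, 1 ≤ f x) : 2 * #s ≤ ∑ x ∈ s, f x + #{x ∈ s | f x = 1} := by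
  calc 2 * #s = ∑ _x ∈ s, 2 := by rw [sum_const, smul_eq_mul, mul_comm]
    _ ≤ ∑ x ∈ s, (f x + if f x = 1 then 1 else 0) :=
      sum_le_sum fun x hx => by have := hf x hx; split_ifs <;> omega
    _ = ∑ x ∈ s, f x + #{x ∈ s | f x = 1} := by rw [sum_add_distrib, card_filter]

namespace SimpleGraph

variable {V : Type*} (G : SimpleGraph V)

lemma ncard_neighborSet_eq_degree [Fintype V] [DecidableRel G.Adj] (v : V) :
    (G.neighborSet v).ncard = G.degree v := by
  rw [← card_neighborSet_eq_degree, ← Nat.card_eq_fintype_card, Nat.card_coe_set_eq]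

lemma neighborSet_inter_eq_singleton_iff (I : Finset V) (x v : V) [DecidablePred (G.Adj x)] :
    G.neighborSet x ∩ I = {v} ↔ {w ∈ I | G.Adj x w} = {v} := by
  rw [← coe_eq_singleton, coe_filter, Set.inter_comm]
  rfl

variable [Fintype V] [DecidableRel G.Adj]

lemma card_filter_adj_le_degree (s : Finset V) (v : V) : #{x ∈ s | G.Adj x v} ≤ G.degree v := by
  rw [← card_neighborFinset_eq_degree]
  exact card_le_card fun x hx => by simpa using (mem_filter.mp hx).2.symm

lemma sum_card_filter_adj_le_sum_degree (U I : Finset V) :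
    ∑ x ∈ U, #{v ∈ I | G.Adj x v} ≤ ∑ v ∈ I, G.degree v :=
  (sum_card_bipartiteAbove_eq_sum_card_bipartiteBelow G.Adj).trans_le <|
    sum_le_sum fun v _ => G.card_filter_adj_le_degree U v

lemma card_filter_card_adj_eq_one_le [DecidableEq V] (U I Y : Finset V) :
    #{x ∈ U | #{v ∈ I | G.Adj x v} = 1} ≤
      #{x ∈ U | ∃ v ∈ Y, {w ∈ I | G.Adj x w} = {v}} + ∑ v ∈ I \ Y, G.degree v := by
  have hcover : {x ∈ U | #{v ∈ I | G.Adj x v} = 1} ⊆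
      {x ∈ U | ∃ v ∈ Y, {w ∈ I | G.Adj x w} = {v}} ∪
        (I \ Y).biUnion fun v => {x ∈ U | G.Adj x v} := by
    intro x hx
    obtain ⟨hxU, hx1⟩ := mem_filter.mp hx
    obtain ⟨v, hv⟩ := card_eq_one.mp hx1
    have hvI : v ∈ {w ∈ I | G.Adj x w} := hv ▸ mem_singleton_self v
    by_cases hvY : v ∈ Y
    · exact mem_union_left _ (mem_filter.mpr ⟨hxU, v, hvY, hv⟩)
    · refine mem_union_right _ (mem_biUnion.mpr ⟨v, mem_sdiff.mpr ⟨?_, hvY⟩, ?_⟩)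
      · exact (mem_filter.mp hvI).1
      · exact mem_filter.mpr ⟨hxU, (mem_filter.mp hvI).2⟩
  calc _ ≤ _ := card_le_card hcover
    _ ≤ _ := card_union_le _ _
    _ ≤ _ := by
      gcongr
      exact card_biUnion_le.trans <| sum_le_sum fun v _ => G.card_filter_adj_le_degree U v

end SimpleGraph

/-- With I of size ≤ 2(t−d−1) dominating t disjoint classes of size at least n in a
graph of maximum degree ≤ Δ, for every Y ⊆ I the set of vertices of the classes whose
unique neighbour in I lies in Y has size ≥ (|Y| + 4d + 4 − 4t)Δ + 2tn. -/
theorem stmt5 {V : Type} [Fintype V] (t d n Δ : ℕ)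
    (G : SimpleGraph V) (hΔ : ∀ v, (G.neighborSet v).ncard ≤ Δ)
    (classes : Fin t → Finset V)
    (hdisj : ∀ i j, i ≠ j → Disjoint (classes i) (classes j))
    (hsize : ∀ i, n ≤ (classes i).card)
    (I : Finset V)
    (hI : (I.card : ℤ) ≤ 2 * ((t : ℤ) - d - 1))
    (hdom : ∀ i, ∀ x ∈ classes i, ∃ y ∈ I, G.Adj x y)
    (Y : Finset V) (hY : Y ⊆ I) :
    ((Y.card : ℤ) + 4 * d + 4 - 4 * t) * Δ + 2 * t * n ≤
      ((({x | (∃ i, x ∈ classes i) ∧ ∃ v ∈ Y, G.neighborSet x ∩ ↑I = {v}} : Set V).ncard : ℤ)) := by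
  classical
  set U := univ.biUnion classes
  have hdeg (v : V) : G.degree v ≤ Δ := G.ncard_neighborSet_eq_degree v ▸ hΔ v
  have hU : t * n ≤ #U := by
    rw [card_biUnion fun i _ j _ hij => hdisj i j hij]
    simpa [mul_comm] using sum_le_sum fun i (_ : i ∈ univ) => hsize i
  have hdomU (x : V) (hx : x ∈ U) : 1 ≤ #{v ∈ I | G.Adj x v} := by
    obtain ⟨i, -, hi⟩ := mem_biUnion.mp hx
    obtain ⟨y, hy, hxy⟩ := hdom i x hi
    exact card_pos.mpr ⟨y, mem_filter.mpr ⟨hy, hxy⟩⟩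
  set A := {x ∈ U | ∃ v ∈ Y, {w ∈ I | G.Adj x w} = {v}}
  have htarget : {x | (∃ i, x ∈ classes i) ∧ ∃ v ∈ Y, G.neighborSet x ∩ ↑I = {v}} = ↑A := by
    ext x
    simp [A, U, G.neighborSet_inter_eq_singleton_iff]
  have hedges : ∑ x ∈ U, #{v ∈ I | G.Adj x v} ≤ #I * Δ :=
    (G.sum_card_filter_adj_le_sum_degree U I).trans (sum_le_card_nsmul _ _ _ fun v _ => hdeg v)
  have hunique : #{x ∈ U | #{v ∈ I | G.Adj x v} = 1} ≤ #A + #(I \ Y) * Δ :=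
    (G.card_filter_card_adj_eq_one_le U I Y).trans
      (Nat.add_le_add_left (sum_le_card_nsmul _ _ _ fun v _ => hdeg v) _)
  have hcount : 2 * #U ≤ #I * Δ + (#A + #(I \ Y) * Δ) :=
    (two_mul_card_le_sum_add_card_filter_eq_one U _ hdomU).trans (add_le_add hedges hunique)
  have hsplit : (#(I \ Y) : ℤ) = #I - #Y := by
    rw [eq_sub_iff_add_eq]; exact_mod_cast card_sdiff_add_card_eq_card hY
  have hIΔ : (#I : ℤ) * Δ ≤ 2 * (t - d - 1) * Δ := mul_le_mul_of_nonneg_right hI (by positivity)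
  rw [htarget, Set.ncard_coe_finset]
  zify at hU hcount
  rw [hsplit] at hcount
  linarith
end

section
/- With the same setup (I of size at most 2(t−d−1) dominating the union V' of t ≤ r disjoint classes of size n each, maximum degree ≤ Δ): if n > 2Δ(1 − (4d+5)/(4r)), then for every subset Y ⊆ I, |⋃_{v∈Y} A_v| > (|Y| − 1)Δ. -/
/-!
Let `U` be the set of vertices of `V'` whose unique neighbour in `I` lies in `Y`. Every
`x ∈ V'` has a neighbour in `I`, so `2 ≤ [x ∈ U] + |N(x) ∩ Y| + 2 |N(x) ∩ (I \ Y)|`.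
Summing over `V'` and double counting the edges towards `Y` and `I \ Y` gives
`2 |V'| + |Y| Δ ≤ |U| + 2 |I| Δ`. Since `|V'| ≥ t n` and `2 |I| ≤ 4 (t - d - 1)`, the bound
on `n` turns this into `|U| > (|Y| - 1) Δ`.
-/

open Finset

theorem Finset.two_le_ite_add_card_inter_add_two_mul_card_sdiff {α : Type*} [DecidableEq α]
    {F : Finset α} (hF : F.Nonempty) (Y : Finset α) [Decidable (∃ v ∈ Y, F = {v})] :
    2 ≤ (if ∃ v ∈ Y, F = {v} then 1 else 0) + #(F ∩ Y) + 2 * #(F \ Y) := by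
  by_cases hFY : F ⊆ Y
  · rw [inter_eq_left.mpr hFY]
    obtain ⟨v, rfl⟩ | hF2 := hF.exists_eq_singleton_or_nontrivial
    · rw [if_pos ⟨v, hFY (mem_singleton_self v), rfl⟩, card_singleton]
      omega
    · have := one_lt_card_iff_nontrivial.mpr hF2
      omega
  · have := card_pos.mpr (sdiff_nonempty.mpr hFY)
    omega

namespace SimpleGraph

variable {V : Type*} (G : SimpleGraph V) [Fintype V] [DecidableEq V] [DecidableRel G.Adj]

/-- For `S = V'` this is the paper's `⋃_{v ∈ Y} A_v`. -/
def uniquelyDominatedBy (I Y S : Finset V) : Finset V :=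
  {x ∈ S | ∃ v ∈ Y, G.neighborFinset x ∩ I = {v}}

theorem sum_card_neighborFinset_inter_le {Δ : ℕ} (hΔ : ∀ v, G.degree v ≤ Δ)
    (S W : Finset V) :
    ∑ x ∈ S, #(G.neighborFinset x ∩ W) ≤ #W * Δ := by
  calc ∑ x ∈ S, #(G.neighborFinset x ∩ W)
      = ∑ x ∈ S, #(W.bipartiteAbove G.Adj x) := by
        refine sum_congr rfl fun x _ => congrArg card ?_
        ext w
        simp [bipartiteAbove, and_comm]
    _ = ∑ w ∈ W, #(S.bipartiteBelow G.Adj w) :=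
        sum_card_bipartiteAbove_eq_sum_card_bipartiteBelow _
    _ ≤ ∑ _w ∈ W, Δ := by
        refine sum_le_sum fun w _ => le_trans (card_le_card fun x hx => ?_) (hΔ w)
        simp only [bipartiteBelow, mem_filter] at hx
        simpa using hx.2.symm
    _ = #W * Δ := by rw [sum_const, smul_eq_mul]

theorem two_mul_card_add_card_mul_le {Δ : ℕ} (hΔ : ∀ v, G.degree v ≤ Δ) {I Y S : Finset V}
    (hY : Y ⊆ I) (hdom : ∀ x ∈ S, ∃ y ∈ I, G.Adj x y) :
    2 * #S + #Y * Δ ≤ #(G.uniquelyDominatedBy I Y S) + 2 * #I * Δ := by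
  have hpoint : ∀ x ∈ S, 2 ≤ (if ∃ v ∈ Y, G.neighborFinset x ∩ I = {v} then 1 else 0)
      + #(G.neighborFinset x ∩ Y) + 2 * #(G.neighborFinset x ∩ (I \ Y)) := by
    intro x hx
    obtain ⟨y, hyI, hxy⟩ := hdom x hx
    have hne : (G.neighborFinset x ∩ I).Nonempty := ⟨y, by simp [hyI, hxy]⟩
    have := two_le_ite_add_card_inter_add_two_mul_card_sdiff hne Y
    rwa [inter_assoc, inter_eq_right.mpr hY, inter_sdiff_assoc] at this
  have hsum : 2 * #S ≤ #(G.uniquelyDominatedBy I Y S) + #Y * Δ + 2 * (#(I \ Y) * Δ) := by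
    calc 2 * #S = ∑ _x ∈ S, 2 := by rw [sum_const, smul_eq_mul, mul_comm]
      _ ≤ _ := sum_le_sum hpoint
      _ = #(G.uniquelyDominatedBy I Y S) + ∑ x ∈ S, #(G.neighborFinset x ∩ Y)
          + 2 * ∑ x ∈ S, #(G.neighborFinset x ∩ (I \ Y)) := by
        rw [uniquelyDominatedBy, card_filter, sum_add_distrib, sum_add_distrib, mul_sum]
      _ ≤ _ := by
        gcongr <;> exact G.sum_card_neighborFinset_inter_le hΔ S _
  have hI := card_sdiff_add_card_eq_card hY
  calc 2 * #S + #Y * Δ ≤ #(G.uniquelyDominatedBy I Y S) + 2 * ((#(I \ Y) + #Y) * Δ) := by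
        linarith
    _ = _ := by rw [hI, mul_assoc]

end SimpleGraph

theorem four_mul_sub_mul_lt_two_mul_mul {t r d n Δ : ℝ} (ht : 0 < t) (htr : t ≤ r)
    (hd : 0 ≤ d) (hΔ : 0 ≤ Δ) (hn : n > 2 * Δ * (1 - (4 * d + 5) / (4 * r))) :
    (4 * t - 4 * d - 5) * Δ < 2 * t * n := by
  have hr : 0 < r := ht.trans_le htr
  have hratio : t / r * ((4 * d + 5) * Δ) ≤ (4 * d + 5) * Δ :=
    mul_le_of_le_one_left (by positivity) ((div_le_one hr).mpr htr)
  have hexpand : 2 * t * (2 * Δ * (1 - (4 * d + 5) / (4 * r)))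
      = 4 * t * Δ - t / r * ((4 * d + 5) * Δ) := by
    field_simp
    ring
  nlinarith [mul_lt_mul_of_pos_left hn (by positivity : (0 : ℝ) < 2 * t)]

theorem stmt6_general {V : Type} [Fintype V] (r t d n Δ : ℕ) (ht : t ≤ r)
    (G : SimpleGraph V) (hΔ : ∀ v, (G.neighborSet v).ncard ≤ Δ)
    (classes : Fin t → Finset V)
    (hdisj : ∀ i j, i ≠ j → Disjoint (classes i) (classes j))
    (hsize : ∀ i, n ≤ (classes i).card)
    (I : Finset V)
    (hI : (I.card : ℤ) ≤ 2 * ((t : ℤ) - d - 1))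
    (hdom : ∀ i, ∀ x ∈ classes i, ∃ y ∈ I, G.Adj x y)
    (hn : (n : ℝ) > 2 * Δ * (1 - (4 * d + 5) / (4 * r)))
    (Y : Finset V) (hY : Y ⊆ I) :
    ((Y.card : ℝ) - 1) * Δ <
      ((({x | (∃ i, x ∈ classes i) ∧ ∃ v ∈ Y, G.neighborSet x ∩ ↑I = {v}} : Set V).ncard : ℝ)) := by
  classical
  set S := univ.biUnion classes
  have hdeg : ∀ v, G.degree v ≤ Δ := fun v => by
    simpa [← SimpleGraph.coe_neighborFinset, ← SimpleGraph.card_neighborFinset_eq_degree]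
      using hΔ v
  have hS : t * n ≤ #S := by
    rw [card_biUnion fun i _ j _ hij => hdisj i j hij]
    simpa using card_nsmul_le_sum univ (fun i => #(classes i)) n fun i _ => hsize i
  have hcount := G.two_mul_card_add_card_mul_le hdeg hY (S := S) (fun x hx => by
    obtain ⟨i, -, hi⟩ := mem_biUnion.mp hx
    exact hdom i x hi)
  have hU : {x | (∃ i, x ∈ classes i) ∧ ∃ v ∈ Y, G.neighborSet x ∩ ↑I = {v}}
      = (G.uniquelyDominatedBy I Y S : Set V) := by
    ext x
    simp [SimpleGraph.uniquelyDominatedBy, S, ← SimpleGraph.coe_neighborFinset, ← coe_inter,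
      ← coe_singleton]
  have ht1 : (1 : ℝ) ≤ t := by exact_mod_cast (by omega : 1 ≤ t)
  have hkey := four_mul_sub_mul_lt_two_mul_mul (by linarith) (Nat.cast_le.mpr ht)
    (Nat.cast_nonneg d) (Nat.cast_nonneg Δ) hn
  have hI' : 2 * (#I : ℝ) ≤ 4 * t - 4 * d - 4 := by
    exact_mod_cast (by linarith : (2 * #I : ℤ) ≤ 4 * t - 4 * d - 4)
  have hIΔ := mul_le_mul_of_nonneg_right hI' (Nat.cast_nonneg Δ)
  have hS' : (t : ℝ) * n ≤ #S := by exact_mod_cast hS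
  have hcount' : 2 * (#S : ℝ) + #Y * Δ ≤ #(G.uniquelyDominatedBy I Y S) + 2 * #I * Δ := by
    exact_mod_cast hcount
  rw [hU, Set.ncard_coe_finset]
  linarith

/-- With the same setup, t ≤ r and n > 2Δ(1 − (4d+5)/(4r)): for every Y ⊆ I,
|⋃_{v∈Y} A_v| > (|Y| − 1)Δ. -/
theorem stmt6 {V : Type} [Fintype V] (r t d n Δ : ℕ) (hr : 0 < r) (ht : t ≤ r)
    (G : SimpleGraph V) (hΔ : ∀ v, (G.neighborSet v).ncard ≤ Δ)
    (classes : Fin t → Finset V)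
    (hdisj : ∀ i j, i ≠ j → Disjoint (classes i) (classes j))
    (hsize : ∀ i, n ≤ (classes i).card)
    (I : Finset V)
    (hI : (I.card : ℤ) ≤ 2 * ((t : ℤ) - d - 1))
    (hdom : ∀ i, ∀ x ∈ classes i, ∃ y ∈ I, G.Adj x y)
    (hn : (n : ℝ) > 2 * Δ * (1 - (4 * d + 5) / (4 * r)))
    (Y : Finset V) (hY : Y ⊆ I) :
    ((Y.card : ℝ) - 1) * Δ <
      ((({x | (∃ i, x ∈ classes i) ∧ ∃ v ∈ Y, G.neighborSet x ∩ ↑I = {v}} : Set V).ncard : ℝ)) :=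
  stmt6_general r t d n Δ ht G hΔ classes hdisj hsize I hI hdom hn Y hY
end

section
/- Let T be a forest (multigraph without cycles) obtained by contracting each part of an induced matching configuration, and let I be a set of vertices of an r-partite graph G such that G[I] is a perfect matching on I and the contracted multigraph 𝒢_I on the set S(I) of parts meeting I is a tree. Then for every part V_i ∈ S(I) there exists an independent set T' ⊆ I with exactly one vertex in each part of S(I) \ {V_i} and no vertex in V_i. -/
/-- The multigraph obtained from G[I] by contracting each part-intersection, realized
as a simple graph on the parts meeting I. -/
def contractedGraph {V : Type} [DecidableEq V] {r : ℕ} (G : SimpleGraph V)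
    (part : V → Fin r) (I : Finset V) :
    SimpleGraph {i : Fin r // i ∈ I.image part} :=
  SimpleGraph.fromRel (fun i j => ∃ v ∈ I, ∃ w ∈ I, G.Adj v w ∧ part v = i.1 ∧ part w = j.1)

/-!
Root the tree `𝒢_I` at `V_i` and measure every part by its distance to the root. Each part
`V_j ≠ V_i` has a neighbour closer to the root, so some matching edge `vw` of `G[I]` runs from
`V_j` to a part closer to the root; take `v` as the representative of `V_j`. Two representatives
are never adjacent: if `v ~ v'`, then `v'` is the unique partner of `v` and `v` that of `v'`, so
each of their parts would be strictly closer to the root than the other.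
-/

theorem Finset.exists_transversal {α β : Type*} [DecidableEq α] (part : α → β) (J : Finset β)
    (p : α → Prop) (h : ∀ j ∈ J, ∃ a, p a ∧ part a = j) :
    ∃ T : Finset α, (∀ x ∈ T, p x ∧ part x ∈ J) ∧ ∀ j ∈ J, ∃! x, x ∈ T ∧ part x = j := by
  choose f hfp hfpart using h
  refine ⟨J.attach.image fun j => f j.1 j.2, ?_, fun j hj => ⟨f j hj, ?_, ?_⟩⟩
  · simp only [Finset.mem_image, Finset.mem_attach, true_and, forall_exists_index]
    rintro _ ⟨j, hj⟩ rfl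
    exact ⟨hfp j hj, (hfpart j hj).symm ▸ hj⟩
  · exact ⟨Finset.mem_image.2 ⟨⟨j, hj⟩, Finset.mem_attach _ _, rfl⟩, hfpart j hj⟩
  · rintro _ ⟨hx, hxj⟩
    obtain ⟨⟨k, hk⟩, -, rfl⟩ := Finset.mem_image.1 hx
    obtain rfl : k = j := (hfpart k hk).symm.trans hxj
    rfl

namespace SimpleGraph

theorem Reachable.exists_adj_dist_lt {α : Type*} {H : SimpleGraph α} {u v : α}
    (h : H.Reachable u v) (huv : u ≠ v) : ∃ w, H.Adj u w ∧ H.dist w v < H.dist u v := by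
  obtain ⟨p, hp⟩ := h.exists_walk_length_eq_dist
  cases p with
  | nil => exact absurd rfl huv
  | cons hadj q =>
    refine ⟨_, hadj, ?_⟩
    have := dist_le q
    rw [Walk.length_cons] at hp
    omega

variable {V : Type*} (G : SimpleGraph V)

theorem not_adj_of_partners_descend {β : Type*} [Preorder β] {I : Set V}
    (hmatch : ∀ v ∈ I, ∃! w, w ∈ I ∧ G.Adj v w) (height : V → β) {x y : V}
    (hx : x ∈ I ∧ ∃ w ∈ I, G.Adj x w ∧ height w < height x)
    (hy : y ∈ I ∧ ∃ w ∈ I, G.Adj y w ∧ height w < height y) : ¬ G.Adj x y := by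
  obtain ⟨hxI, wx, hwx, hxwx, hltx⟩ := hx
  obtain ⟨hyI, wy, hwy, hywy, hlty⟩ := hy
  intro hxy
  have hwx_eq : wx = y := (hmatch x hxI).unique ⟨hwx, hxwx⟩ ⟨hyI, hxy⟩
  have hwy_eq : wy = x := (hmatch y hyI).unique ⟨hwy, hywy⟩ ⟨hxI, hxy.symm⟩
  subst hwx_eq hwy_eq
  exact lt_asymm hltx hlty

end SimpleGraph

section contractedGraph

variable {V : Type} [DecidableEq V] {r : ℕ} (G : SimpleGraph V) (part : V → Fin r) (I : Finset V)

theorem exists_adj_of_contractedGraph_adj {a b : {j : Fin r // j ∈ I.image part}}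
    (h : (contractedGraph G part I).Adj a b) :
    ∃ v ∈ I, ∃ w ∈ I, G.Adj v w ∧ part v = a ∧ part w = b := by
  obtain ⟨-, ⟨v, hv, w, hw, hvw, hva, hwb⟩ | ⟨v, hv, w, hw, hvw, hvb, hwa⟩⟩ :=
    SimpleGraph.fromRel_adj _ _ _ |>.1 h
  · exact ⟨v, hv, w, hw, hvw, hva, hwb⟩
  · exact ⟨w, hw, v, hv, hvw.symm, hwa, hvb⟩

noncomputable def rootDist (i j : Fin r) : ℕ :=
  if h : i ∈ I.image part ∧ j ∈ I.image part then
    (contractedGraph G part I).dist ⟨j, h.2⟩ ⟨i, h.1⟩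
  else 0

theorem rootDist_of_mem {i j : Fin r} (hi : i ∈ I.image part) (hj : j ∈ I.image part) :
    rootDist G part I i j = (contractedGraph G part I).dist ⟨j, hj⟩ ⟨i, hi⟩ :=
  dif_pos ⟨hi, hj⟩

theorem exists_edge_toward_root (hconn : (contractedGraph G part I).Connected) {i j : Fin r}
    (hi : i ∈ I.image part) (hj : j ∈ I.image part) (hji : j ≠ i) :
    ∃ v, (v ∈ I ∧ ∃ w ∈ I, G.Adj v w ∧ rootDist G part I i (part w) < rootDist G part I i (part v))
      ∧ part v = j := by
  obtain ⟨k, hjk, hk⟩ := (hconn.preconnected ⟨j, hj⟩ ⟨i, hi⟩).exists_adj_dist_lt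
    (fun h => hji (congrArg Subtype.val h))
  obtain ⟨v, hv, w, hw, hvw, hvj, hwk⟩ := exists_adj_of_contractedGraph_adj G part I hjk
  refine ⟨v, ⟨hv, w, hw, hvw, ?_⟩, hvj⟩
  rwa [hvj, hwk, rootDist_of_mem G part I hi hj, rootDist_of_mem G part I hi k.2]

end contractedGraph

theorem stmt8_general {V : Type} [DecidableEq V] (r : ℕ) (G : SimpleGraph V)
    (part : V → Fin r)
    (I : Finset V)
    (hmatch : ∀ v ∈ I, ∃! w, w ∈ I ∧ G.Adj v w)
    (htree : (contractedGraph G part I).IsTree) :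
    ∀ i ∈ I.image part, ∃ T' ⊆ I,
      (∀ x ∈ T', ∀ y ∈ T', ¬ G.Adj x y) ∧
      (∀ j ∈ I.image part, j ≠ i → ∃! x, x ∈ T' ∧ part x = j) ∧
      (∀ x ∈ T', part x ≠ i) := by
  intro i hi
  let height v := rootDist G part I i (part v)
  obtain ⟨T', hT', hunique⟩ := Finset.exists_transversal part ((I.image part).erase i)
    (fun v => v ∈ I ∧ ∃ w ∈ I, G.Adj v w ∧ height w < height v)
    fun j hj => exists_edge_toward_root G part I htree.connected hi
      (Finset.mem_of_mem_erase hj) (Finset.ne_of_mem_erase hj)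
  refine ⟨T', fun x hx => (hT' x hx).1.1,
    fun x hx y hy => G.not_adj_of_partners_descend hmatch height (hT' x hx).1 (hT' y hy).1,
    fun j hj hji => hunique j (Finset.mem_erase.2 ⟨hji, hj⟩),
    fun x hx => Finset.ne_of_mem_erase (hT' x hx).2⟩

/-- If G[I] is a perfect matching and the contracted graph 𝒢_I is a tree on S(I), then
for every part V_i ∈ S(I) there is an independent set T' ⊆ I with exactly one vertex in
each part of S(I) \ {V_i} and none in V_i. -/
theorem stmt8 {V : Type} [Fintype V] [DecidableEq V] (r : ℕ) (G : SimpleGraph V)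
    (part : V → Fin r) (hpartite : ∀ v w, G.Adj v w → part v ≠ part w)
    (I : Finset V)
    (hmatch : ∀ v ∈ I, ∃! w, w ∈ I ∧ G.Adj v w)
    (htree : (contractedGraph G part I).IsTree) :
    ∀ i ∈ I.image part, ∃ T' ⊆ I,
      (∀ x ∈ T', ∀ y ∈ T', ¬ G.Adj x y) ∧
      (∀ j ∈ I.image part, j ≠ i → ∃! x, x ∈ T' ∧ part x = j) ∧
      (∀ x ∈ T', part x ≠ i) :=
  stmt8_general r G part I hmatch htree
end

section
/- Let G be an r-partite graph whose maximum independent partial transversal has size at most r − D, and let G' be the disjoint union of G with the complete multipartite graph K_r(⌊Δ/(r−1)⌋), placing one independent class of size ⌊Δ/(r−1)⌋ into each part. If G has maximum degree at most Δ, then G' has maximum degree at most Δ and the maximum independent partial transversal of G' has size at most r − D + 1. (This yields n(r, D−1, Δ) ≥ n(r, D, Δ) + ⌊Δ/(r−1)⌋.) -/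
/-!
The added copy of `K_r(m)` is a separate component, so every neighbourhood lies either in `G`
or in the copy, where it has `(r - 1) * m ≤ Δ` vertices. An independent partial transversal
meets the copy in at most one vertex, because two vertices of the copy are either adjacent or
in the same part.
-/

namespace SimpleGraph

variable {V W ι : Type*}

lemma fromRel_sumRel_eq_sum (G : SimpleGraph V) (H : SimpleGraph W) :
    fromRel (fun x y => (∃ a b, x = Sum.inl a ∧ y = Sum.inl b ∧ G.Adj a b) ∨
      (∃ p q, x = Sum.inr p ∧ y = Sum.inr q ∧ H.Adj p q)) = G ⊕g H := by
  ext (a | p) (b | q) <;> simp [adj_comm] <;> exact Adj.ne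

lemma ncard_neighborSet_sum_le {G : SimpleGraph V} {H : SimpleGraph W} {Δ : ℕ}
    (hG : ∀ v, (G.neighborSet v).ncard ≤ Δ) (hH : ∀ w, (H.neighborSet w).ncard ≤ Δ) :
    ∀ x, ((G ⊕g H).neighborSet x).ncard ≤ Δ := by
  rintro (v | w)
  · rw [neighborSet_sum_inl, Set.ncard_image_of_injective _ Sum.inl_injective]
    exact hG v
  · rw [neighborSet_sum_inr, Set.ncard_image_of_injective _ Sum.inr_injective]
    exact hH w

lemma ncard_neighborSet_completeEquipartiteGraph {r t : ℕ} (v : Fin r × Fin t) :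
    ((completeEquipartiteGraph r t).neighborSet v).ncard = (r - 1) * t := by
  rw [← degree_completeEquipartiteGraph v, ← card_neighborSet_eq_degree,
    Set.ncard_eq_toFinset_card', Set.toFinset_card]

def IsIndepPartialTransversal (G : SimpleGraph V) (part : V → ι) (S : Finset V) : Prop :=
  (∀ x ∈ S, ∀ y ∈ S, ¬ G.Adj x y) ∧ Set.InjOn part S

namespace IsIndepPartialTransversal

variable {G : SimpleGraph V} {H : SimpleGraph W} {f : V → ι} {g : W → ι} {S : Finset (V ⊕ W)}

lemma sumLeft (hS : (G ⊕g H).IsIndepPartialTransversal (Sum.elim f g) S) :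
    G.IsIndepPartialTransversal f S.toLeft :=
  ⟨fun _ hx _ hy => hS.1 _ (Finset.mem_toLeft.1 hx) _ (Finset.mem_toLeft.1 hy),
    fun _ hx _ hy hxy =>
      Sum.inl_injective <| hS.2 (Finset.mem_toLeft.1 hx) (Finset.mem_toLeft.1 hy) hxy⟩

lemma sumRight (hS : (G ⊕g H).IsIndepPartialTransversal (Sum.elim f g) S) :
    H.IsIndepPartialTransversal g S.toRight :=
  ⟨fun _ hx _ hy => hS.1 _ (Finset.mem_toRight.1 hx) _ (Finset.mem_toRight.1 hy),
    fun _ hx _ hy hxy =>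
      Sum.inr_injective <| hS.2 (Finset.mem_toRight.1 hx) (Finset.mem_toRight.1 hy) hxy⟩

lemma card_le_one_of_completeEquipartiteGraph {r t : ℕ} {S : Finset (Fin r × Fin t)}
    (hS : (completeEquipartiteGraph r t).IsIndepPartialTransversal Prod.fst S) : S.card ≤ 1 :=
  Finset.card_le_one.2 fun p hp q hq => hS.2 hp hq (not_not.1 (hS.1 p hp q hq))

end IsIndepPartialTransversal

end SimpleGraph

theorem stmt15_general {V : Type} (r D Δ : ℕ)
    (G : SimpleGraph V) (part : V → Fin r)
    (hpartite : ∀ v w, G.Adj v w → part v ≠ part w)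
    (hdeg : ∀ v, (G.neighborSet v).ncard ≤ Δ)
    (hIT : ∀ S : Finset V, (∀ x ∈ S, ∀ y ∈ S, ¬ G.Adj x y) → Set.InjOn part ↑S →
      S.card ≤ r - D) :
    let m := Δ / (r - 1)
    let G' : SimpleGraph (V ⊕ (Fin r × Fin m)) := SimpleGraph.fromRel (fun x y =>
      (∃ a b, x = Sum.inl a ∧ y = Sum.inl b ∧ G.Adj a b) ∨
      (∃ p q : Fin r × Fin m, x = Sum.inr p ∧ y = Sum.inr q ∧ p.1 ≠ q.1))
    let part' : V ⊕ (Fin r × Fin m) → Fin r := Sum.elim part Prod.fst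
    (∀ v, (G'.neighborSet v).ncard ≤ Δ) ∧
    (∀ v w, G'.Adj v w → part' v ≠ part' w) ∧
    ∀ S : Finset (V ⊕ (Fin r × Fin m)), (∀ x ∈ S, ∀ y ∈ S, ¬ G'.Adj x y) →
      Set.InjOn part' ↑S → S.card ≤ r - D + 1 := by
  intro m G' part'
  have hG' : G' = G ⊕g SimpleGraph.completeEquipartiteGraph r m :=
    SimpleGraph.fromRel_sumRel_eq_sum G (SimpleGraph.completeEquipartiteGraph r m)
  refine ⟨?_, ?_, ?_⟩
  · rw [hG']
    refine SimpleGraph.ncard_neighborSet_sum_le hdeg fun p => ?_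
    rw [SimpleGraph.ncard_neighborSet_completeEquipartiteGraph]
    exact Nat.mul_div_le Δ (r - 1)
  · rw [hG']
    exact fun _ _ => ((SimpleGraph.Coloring.mk part fun h => hpartite _ _ h).sum
      (SimpleGraph.Coloring.mk Prod.fst fun h => h)).valid
  · intro S hind hinj
    rw [hG'] at hind
    have hS : (G ⊕g SimpleGraph.completeEquipartiteGraph r m).IsIndepPartialTransversal
        part' S := ⟨hind, hinj⟩
    rw [← Finset.card_toLeft_add_card_toRight]
    exact add_le_add (hIT _ hS.sumLeft.1 hS.sumLeft.2)
      hS.sumRight.card_le_one_of_completeEquipartiteGraph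

/-- Adding a copy of K_r(⌊Δ/(r−1)⌋) (one class in each part) to an r-partite graph G of
maximum degree ≤ Δ whose partial independent transversals have size ≤ r − D yields a
graph of maximum degree ≤ Δ whose partial independent transversals have size
≤ r − D + 1. -/
theorem stmt15 {V : Type} [Fintype V] (r D Δ : ℕ) (hr : 2 ≤ r) (hD : 1 ≤ D) (hDr : D ≤ r)
    (G : SimpleGraph V) (part : V → Fin r)
    (hpartite : ∀ v w, G.Adj v w → part v ≠ part w)
    (hdeg : ∀ v, (G.neighborSet v).ncard ≤ Δ)
    (hIT : ∀ S : Finset V, (∀ x ∈ S, ∀ y ∈ S, ¬ G.Adj x y) → Set.InjOn part ↑S →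
      S.card ≤ r - D) :
    let m := Δ / (r - 1)
    let G' : SimpleGraph (V ⊕ (Fin r × Fin m)) := SimpleGraph.fromRel (fun x y =>
      (∃ a b, x = Sum.inl a ∧ y = Sum.inl b ∧ G.Adj a b) ∨
      (∃ p q : Fin r × Fin m, x = Sum.inr p ∧ y = Sum.inr q ∧ p.1 ≠ q.1))
    let part' : V ⊕ (Fin r × Fin m) → Fin r := Sum.elim part Prod.fst
    (∀ v, (G'.neighborSet v).ncard ≤ Δ) ∧
    (∀ v w, G'.Adj v w → part' v ≠ part' w) ∧
    ∀ S : Finset (V ⊕ (Fin r × Fin m)), (∀ x ∈ S, ∀ y ∈ S, ¬ G'.Adj x y) →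
      Set.InjOn part' ↑S → S.card ≤ r - D + 1 :=
  stmt15_general r D Δ G part hpartite hdeg hIT
end

section
/- Let m = jl for positive integers j, l ≥ 2, and let G be an r-partite graph of maximum degree at most Δ with parts of size n whose maximum independent partial transversal has size at most r − D. Form G' as the disjoint union of m copies of G together with a copy of K_m(r·⌊Δ/((m−1)r)⌋), with each of the m independent classes of the complete multipartite graph split evenly into the r parts of one copy (row). Then G' has maximum degree at most Δ, each part of G' has size n + ⌊Δ/((m−1)r)⌋, and the maximum independent partial transversal of G' has size at most mr − (m−1)D. -/
/-! A vertex in a copy of `G` keeps its neighbourhood, and a vertex of the multipartite graph is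
adjacent exactly to the `(m - 1) r ⌊Δ/((m-1)r)⌋ ≤ Δ` vertices outside its class. Small vertices in
different rows are adjacent, so an independent partial transversal has small vertices in at most
one row; that row contributes at most `r` vertices and every other row, being an independent
partial transversal of a copy of `G`, at most `r - D`. -/

open Finset

theorem Set.ncard_eq_ncard_preimage_inl_add_ncard_preimage_inr {α β : Type*}
    (s : Set (α ⊕ β)) (hs : s.Finite := by toFinite_tac) :
    s.ncard = (Sum.inl ⁻¹' s).ncard + (Sum.inr ⁻¹' s).ncard := by
  conv_lhs => rw [← Set.image_preimage_inl_union_image_preimage_inr s]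
  rw [Set.ncard_union_eq Set.disjoint_image_inl_image_inr
      ((hs.preimage Sum.inl_injective.injOn).image _)
      ((hs.preimage Sum.inr_injective.injOn).image _),
    Set.ncard_image_of_injective _ Sum.inl_injective,
    Set.ncard_image_of_injective _ Sum.inr_injective]

theorem Finset.sum_le_of_forall_ne_le_or_le {ι : Type*} [Fintype ι] (f : ι → ℕ) {r D : ℕ}
    (hD : D ≤ r) (hf : ∀ i, f i ≤ r) (hone : ∀ i j, i ≠ j → f i ≤ r - D ∨ f j ≤ r - D) :
    ∑ i, f i ≤ Fintype.card ι * r - (Fintype.card ι - 1) * D := by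
  classical
  by_cases hbig : ∃ i₀, r - D < f i₀
  · obtain ⟨i₀, hi₀⟩ := hbig
    have hrest : ∀ i ∈ univ.erase i₀, f i ≤ r - D := fun i hi =>
      (hone i i₀ (ne_of_mem_erase hi)).resolve_right hi₀.not_ge
    obtain ⟨c, hc⟩ := Nat.exists_eq_add_one_of_ne_zero (Fintype.card_pos_iff.2 ⟨i₀⟩).ne'
    calc ∑ i, f i = f i₀ + ∑ i ∈ univ.erase i₀, f i := (add_sum_erase _ _ (mem_univ i₀)).symm
      _ ≤ r + c * (r - D) := by
        gcongr
        · exact hf i₀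
        · simpa [card_erase_of_mem, hc] using sum_le_card_nsmul _ f _ hrest
      _ ≤ Fintype.card ι * r - (Fintype.card ι - 1) * D := by
        rw [hc, Nat.add_sub_cancel, add_one_mul, Nat.mul_sub]
        have := Nat.mul_le_mul_left c hD
        omega
  · push Not at hbig
    calc ∑ i, f i ≤ Fintype.card ι * (r - D) := by
          simpa using sum_le_card_nsmul univ f _ fun i _ => hbig i
      _ ≤ Fintype.card ι * r - (Fintype.card ι - 1) * D := by
        rw [Nat.mul_sub]
        exact Nat.sub_le_sub_left (Nat.mul_le_mul_right D (Nat.sub_le _ 1)) _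

namespace SimpleGraph

variable {ι V W κ : Type*}

/-- `⊥ □ G` is the disjoint union of copies of `G` indexed by `ι`; beside it sits the complete
multipartite graph on `ι × W` with classes `{i} × W`. -/
def copiesSumMultipartite (G : SimpleGraph V) (ι W : Type*) :
    SimpleGraph ((ι × V) ⊕ (ι × W)) :=
  (⊥ : SimpleGraph ι).boxProd G ⊕g (⊤ : SimpleGraph ι).comap Prod.fst

def rowPart (part : V → κ) (q : W → κ) : (ι × V) ⊕ (ι × W) → ι × κ :=
  Sum.elim (fun z => (z.1, part z.2)) (fun z => (z.1, q z.2))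

variable (G : SimpleGraph V)

@[simp]
theorem copiesSumMultipartite_adj_inl_inl {i j : ι} {a b : V} :
    (G.copiesSumMultipartite ι W).Adj (.inl (i, a)) (.inl (j, b)) ↔ i = j ∧ G.Adj a b := by
  simp [copiesSumMultipartite, and_comm]

@[simp]
theorem copiesSumMultipartite_adj_inr_inr {p p' : ι × W} :
    (G.copiesSumMultipartite ι W).Adj (.inr p) (.inr p') ↔ p.1 ≠ p'.1 := by
  simp [copiesSumMultipartite]

theorem ncard_neighborSet_copiesSumMultipartite_inl (i : ι) (a : V) :
    ((G.copiesSumMultipartite ι W).neighborSet (.inl (i, a))).ncard =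
      (G.neighborSet a).ncard := by
  rw [copiesSumMultipartite, neighborSet_sum_inl, Set.ncard_image_of_injective _ Sum.inl_injective,
    neighborSet_boxProd]
  simp [Set.ncard_prod]

theorem ncard_neighborSet_copiesSumMultipartite_inr [Fintype ι] [Fintype W] (p : ι × W) :
    ((G.copiesSumMultipartite ι W).neighborSet (.inr p)).ncard =
      (Fintype.card ι - 1) * Fintype.card W := by
  have : ((⊤ : SimpleGraph ι).comap Prod.fst).neighborSet p = {p.1}ᶜ ×ˢ (Set.univ : Set W) := by
    ext; simp [eq_comm]
  rw [copiesSumMultipartite, neighborSet_sum_inr, Set.ncard_image_of_injective _ Sum.inr_injective,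
    this, Set.ncard_prod, Set.ncard_compl]
  simp

theorem ncard_rowPart_fiber [Finite ι] [Finite V] [Finite W] (part : V → κ) (q : W → κ)
    (i : ι) (k : κ) :
    {x | rowPart part q x = (i, k)}.ncard = {a | part a = k}.ncard + {w | q w = k}.ncard := by
  rw [Set.ncard_eq_ncard_preimage_inl_add_ncard_preimage_inr]
  have hl : Sum.inl ⁻¹' {x | rowPart part q x = (i, k)} = {i} ×ˢ {a | part a = k} := by
    ext; simp [rowPart]
  have hr : Sum.inr ⁻¹' {x | rowPart part q x = (i, k)} = {i} ×ˢ {w | q w = k} := by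
    ext; simp [rowPart]
  simp [hl, hr, Set.ncard_prod]

section Transversal

variable {G} {part : V → κ} {q : W → κ} {S : Finset ((ι × V) ⊕ (ι × W))}

theorem forall_inr_notMem_or_forall_inr_notMem
    (hind : ∀ x ∈ S, ∀ y ∈ S, ¬ (G.copiesSumMultipartite ι W).Adj x y) {i j : ι} (hij : i ≠ j) :
    (∀ w, .inr (i, w) ∉ S) ∨ ∀ w, .inr (j, w) ∉ S := by
  by_contra! ⟨⟨w, hw⟩, ⟨w', hw'⟩⟩
  exact hind _ hw _ hw' (by simpa using hij)

variable [DecidableEq ι]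

theorem card_filter_row_le [Fintype κ] (hinj : Set.InjOn (rowPart part q : _ → ι × κ) S) (i : ι) :
    #{x ∈ S | (rowPart part q x).1 = i} ≤ Fintype.card κ :=
  card_le_card_of_injOn (fun x => (rowPart part q x).2) (fun _ _ => mem_univ _)
    fun _ hx _ hy h => hinj (mem_filter.1 hx).1 (mem_filter.1 hy).1
      (Prod.ext ((mem_filter.1 hx).2.trans (mem_filter.1 hy).2.symm) h)

theorem card_filter_row_le_of_forall_inr_notMem
    (hind : ∀ x ∈ S, ∀ y ∈ S, ¬ (G.copiesSumMultipartite ι W).Adj x y)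
    (hinj : Set.InjOn (rowPart part q : _ → ι × κ) S) {N : ℕ}
    (hIT : ∀ T : Finset V, (∀ x ∈ T, ∀ y ∈ T, ¬ G.Adj x y) → Set.InjOn part T → #T ≤ N)
    {i : ι} (hi : ∀ w, .inr (i, w) ∉ S) :
    #{x ∈ S | (rowPart part q x).1 = i} ≤ N := by
  obtain ⟨e, he⟩ : ∃ e : V ↪ (ι × V) ⊕ (ι × W), ∀ a, e a = .inl (i, a) :=
    ⟨⟨fun a => .inl (i, a), fun a b h => by simpa using h⟩, fun _ => rfl⟩
  set T := S.preimage e e.injective.injOn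
  have hT : #T ≤ N := by
    refine hIT T (fun a ha b hb => ?_) fun a ha b hb h => ?_
    · simpa [he] using hind _ (mem_preimage.1 ha) _ (mem_preimage.1 hb)
    · simpa [he] using hinj (mem_preimage.1 ha) (mem_preimage.1 hb) (by simp [he, rowPart, h])
  calc #{x ∈ S | (rowPart part q x).1 = i} ≤ #(T.map e) := by
        refine card_le_card fun x hx => ?_
        obtain ⟨hxS, rfl⟩ := mem_filter.1 hx
        rcases x with ⟨j, a⟩ | w
        · exact mem_map.2 ⟨a, mem_preimage.2 (he a ▸ hxS), he a⟩
        · exact absurd hxS (hi w.2)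
    _ = #T := card_map e
    _ ≤ N := hT

theorem card_le_of_indep_of_injOn [Fintype ι] [Fintype κ] {D : ℕ} (hD : D ≤ Fintype.card κ)
    (hind : ∀ x ∈ S, ∀ y ∈ S, ¬ (G.copiesSumMultipartite ι W).Adj x y)
    (hinj : Set.InjOn (rowPart part q : _ → ι × κ) S)
    (hIT : ∀ T : Finset V, (∀ x ∈ T, ∀ y ∈ T, ¬ G.Adj x y) → Set.InjOn part T →
      #T ≤ Fintype.card κ - D) :
    #S ≤ Fintype.card ι * Fintype.card κ - (Fintype.card ι - 1) * D := by
  rw [card_eq_sum_card_fiberwise fun x _ => mem_univ (rowPart part q x).1]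
  refine sum_le_of_forall_ne_le_or_le _ hD (card_filter_row_le hinj) fun i j hij => ?_
  exact (forall_inr_notMem_or_forall_inr_notMem hind hij).imp
    (card_filter_row_le_of_forall_inr_notMem hind hinj hIT)
    (card_filter_row_le_of_forall_inr_notMem hind hinj hIT)

end Transversal

end SimpleGraph

open SimpleGraph in
theorem stmt17_general {V : Type} [Fintype V] (r D n Δ m : ℕ)
    (hDr : D ≤ r)
    (G : SimpleGraph V) (part : V → Fin r)
    (hdeg : ∀ v, (G.neighborSet v).ncard ≤ Δ)
    (hsize : ∀ i : Fin r, ({v | part v = i} : Set V).ncard = n)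
    (hIT : ∀ S : Finset V, (∀ x ∈ S, ∀ y ∈ S, ¬ G.Adj x y) → Set.InjOn part ↑S →
      S.card ≤ r - D) :
    let m0 := Δ / ((m - 1) * r)
    let G' : SimpleGraph ((Fin m × V) ⊕ (Fin m × Fin r × Fin m0)) :=
      SimpleGraph.fromRel (fun x y =>
        (∃ i a b, x = Sum.inl (i, a) ∧ y = Sum.inl (i, b) ∧ G.Adj a b) ∨
        (∃ p q : Fin m × Fin r × Fin m0, x = Sum.inr p ∧ y = Sum.inr q ∧ p.1 ≠ q.1))
    let part' : (Fin m × V) ⊕ (Fin m × Fin r × Fin m0) → Fin m × Fin r :=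
      Sum.elim (fun z => (z.1, part z.2)) (fun z => (z.1, z.2.1))
    (∀ v, (G'.neighborSet v).ncard ≤ Δ) ∧
    (∀ c : Fin m × Fin r,
      ({v | part' v = c} : Set ((Fin m × V) ⊕ (Fin m × Fin r × Fin m0))).ncard = n + m0) ∧
    ∀ S : Finset ((Fin m × V) ⊕ (Fin m × Fin r × Fin m0)),
      (∀ x ∈ S, ∀ y ∈ S, ¬ G'.Adj x y) → Set.InjOn part' ↑S →
      S.card ≤ m * r - (m - 1) * D := by
  intro m0 G' part'
  have hG' : G' = G.copiesSumMultipartite (Fin m) (Fin r × Fin m0) := by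
    ext (⟨i, a⟩ | ⟨i, k, t⟩) (⟨j, b⟩ | ⟨j, k', t'⟩) <;>
      simp [G', fromRel_adj, copiesSumMultipartite] <;> grind [G.adj_symm, G.ne_of_adj]
  have hpart' : part' = rowPart part Prod.fst := rfl
  refine ⟨?_, fun ⟨i, k⟩ => ?_, fun S hind hinj => ?_⟩
  · rintro (⟨i, a⟩ | p)
    · exact hG' ▸ (ncard_neighborSet_copiesSumMultipartite_inl G i a).trans_le (hdeg a)
    · rw [hG', ncard_neighborSet_copiesSumMultipartite_inr]
      calc (Fintype.card (Fin m) - 1) * Fintype.card (Fin r × Fin m0)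
          = m0 * ((m - 1) * r) := by simp only [Fintype.card_fin, Fintype.card_prod]; ring
        _ ≤ Δ := Nat.div_mul_le_self Δ _
  · have hsmall : {w : Fin r × Fin m0 | w.1 = k} = {k} ×ˢ Set.univ := by ext; simp
    rw [hpart', ncard_rowPart_fiber, hsize, hsmall, Set.ncard_prod]
    simp
  · rw [hG'] at hind
    simpa using card_le_of_indep_of_injOn (by simpa using hDr) hind hinj (by simpa using hIT)

/-- For m = jl, the union of m copies of an r-partite G (parts of size n, max degree
≤ Δ, partial ITs of size ≤ r − D) with a copy of K_m(r⌊Δ/((m−1)r)⌋), whose classes are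
split evenly into the parts of each row, has maximum degree ≤ Δ, parts of size
n + ⌊Δ/((m−1)r)⌋, and partial independent transversals of size ≤ mr − (m−1)D. -/
theorem stmt17 {V : Type} [Fintype V] (r D n Δ j l m : ℕ)
    (hj : 1 ≤ j) (hl : 2 ≤ l) (hm : m = j * l) (hr : 1 ≤ r) (hDr : D ≤ r)
    (G : SimpleGraph V) (part : V → Fin r)
    (hpartite : ∀ v w, G.Adj v w → part v ≠ part w)
    (hdeg : ∀ v, (G.neighborSet v).ncard ≤ Δ)
    (hsize : ∀ i : Fin r, ({v | part v = i} : Set V).ncard = n)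
    (hIT : ∀ S : Finset V, (∀ x ∈ S, ∀ y ∈ S, ¬ G.Adj x y) → Set.InjOn part ↑S →
      S.card ≤ r - D) :
    let m0 := Δ / ((m - 1) * r)
    let G' : SimpleGraph ((Fin m × V) ⊕ (Fin m × Fin r × Fin m0)) :=
      SimpleGraph.fromRel (fun x y =>
        (∃ i a b, x = Sum.inl (i, a) ∧ y = Sum.inl (i, b) ∧ G.Adj a b) ∨
        (∃ p q : Fin m × Fin r × Fin m0, x = Sum.inr p ∧ y = Sum.inr q ∧ p.1 ≠ q.1))
    let part' : (Fin m × V) ⊕ (Fin m × Fin r × Fin m0) → Fin m × Fin r :=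
      Sum.elim (fun z => (z.1, part z.2)) (fun z => (z.1, z.2.1))
    (∀ v, (G'.neighborSet v).ncard ≤ Δ) ∧
    (∀ c : Fin m × Fin r,
      ({v | part' v = c} : Set ((Fin m × V) ⊕ (Fin m × Fin r × Fin m0))).ncard = n + m0) ∧
    ∀ S : Finset ((Fin m × V) ⊕ (Fin m × Fin r × Fin m0)),
      (∀ x ∈ S, ∀ y ∈ S, ¬ G'.Adj x y) → Set.InjOn part' ↑S →
      S.card ≤ m * r - (m - 1) * D :=
  stmt17_general r D n Δ m hDr G part hdeg hsize hIT
end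

section
/- Let G be an r-partite graph with parts of size n > 2Δ(1 − 1/(q−1)) and maximum degree at most Δ, where q ≥ 2. Suppose I is an IMC whose contracted forest F_I has a component J on b parts such that I ∩ V_J has exactly 2(b−1) vertices and every vertex of G lying in the b parts of J has a neighbor in I ∩ V_J. Then b ≥ q. -/
/-!
Let `S` be the set of vertices in the `b` parts of `J`. Each part has at least `n` vertices, so
`b n ≤ |S|`; every vertex of `S` is adjacent to one of the `2(b-1)` vertices of `I ∩ V_J`, each of
which has at most `Δ` neighbours, so `|S| ≤ 2(b-1)Δ`. If `b ≤ q - 1` then `b / (q-1) ≤ 1`, and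
`b n > 2Δ(b - b/(q-1)) ≥ 2Δ(b-1)` contradicts these two bounds.
-/

open Finset

theorem Finset.mul_card_le_card_filter_mem {V ι : Type*} [Fintype V] [DecidableEq ι]
    (part : V → ι) (J : Finset ι) (n : ℕ)
    (hsize : ∀ i ∈ J, n ≤ ({v | part v = i} : Set V).ncard) :
    n * #J ≤ #{v | part v ∈ J} := by
  refine mul_card_image_le_card_of_maps_to (fun v hv => (mem_filter.1 hv).2) n fun i hi => ?_
  have hfiber : ({v ∈ {v | part v ∈ J} | part v = i} : Finset V) = ({v | part v = i} : Set V) := by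
    ext v
    simp +contextual [hi]
  rw [← Set.ncard_coe_finset, hfiber]
  exact hsize i hi

theorem SimpleGraph.card_le_card_mul_of_forall_exists_adj {V : Type*} [Finite V]
    (G : SimpleGraph V) {S M : Finset V} {Δ : ℕ}
    (hdeg : ∀ w ∈ M, (G.neighborSet w).ncard ≤ Δ) (hdom : ∀ v ∈ S, ∃ w ∈ M, G.Adj v w) :
    #S ≤ #M * Δ := by
  classical
  choose! f hfM hfadj using hdom
  rw [mul_comm]
  refine card_le_mul_card_image_of_maps_to hfM Δ fun w hw => ?_
  have hfiber : (({v ∈ S | f v = w} : Finset V) : Set V) ⊆ G.neighborSet w := by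
    intro v hv
    obtain ⟨hvS, rfl⟩ := mem_filter.1 hv
    exact (hfadj v hvS).symm
  rw [← Set.ncard_coe_finset]
  exact (Set.ncard_le_ncard hfiber).trans (hdeg w hw)

theorem two_mul_pred_mul_lt_mul_of_lt {q b n Δ : ℕ} (hb : 1 ≤ b) (hbq : b < q)
    (hn : (n : ℝ) > 2 * Δ * (1 - 1 / ((q : ℝ) - 1))) :
    2 * (b - 1) * Δ < b * n := by
  have hq : (0 : ℝ) < (q : ℝ) - 1 := by
    have : (b : ℝ) + 1 ≤ q := by exact_mod_cast hbq
    have : (1 : ℝ) ≤ b := by exact_mod_cast hb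
    linarith
  have hbq' : (b : ℝ) / ((q : ℝ) - 1) ≤ 1 := by
    rw [div_le_one hq]
    have : (b : ℝ) + 1 ≤ q := by exact_mod_cast hbq
    linarith
  have hbpos : (0 : ℝ) < b := by exact_mod_cast hb
  suffices (2 * ((b : ℝ) - 1) * Δ) < b * n by
    rw [← Nat.cast_lt (α := ℝ)]
    push_cast [Nat.cast_sub hb]
    exact this
  calc 2 * ((b : ℝ) - 1) * Δ ≤ 2 * Δ * (b - b / ((q : ℝ) - 1)) := by
        nlinarith [(Nat.cast_nonneg Δ : (0 : ℝ) ≤ Δ)]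
    _ = b * (2 * Δ * (1 - 1 / ((q : ℝ) - 1))) := by ring
    _ < b * n := mul_lt_mul_of_pos_left hn hbpos

theorem stmt19_general {V : Type} [Fintype V] (r q b n Δ : ℕ)
    (hb : 1 ≤ b)
    (G : SimpleGraph V) (part : V → Fin r)
    (hdeg : ∀ v, (G.neighborSet v).ncard ≤ Δ)
    (hsize : ∀ i : Fin r, n ≤ ({v | part v = i} : Set V).ncard)
    (hn : (n : ℝ) > 2 * Δ * (1 - 1 / ((q : ℝ) - 1)))
    (I : Finset V)
    (J : Finset (Fin r)) (hJ : J.card = b)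
    (hIJ : (I.filter (fun v => part v ∈ J)).card = 2 * (b - 1))
    (hdom : ∀ v : V, part v ∈ J → ∃ w ∈ I.filter (fun v => part v ∈ J), G.Adj v w) :
    q ≤ b := by
  have hlower : n * b ≤ #{v | part v ∈ J} :=
    hJ ▸ mul_card_le_card_filter_mem part J n fun i _ => hsize i
  have hupper : #{v | part v ∈ J} ≤ 2 * (b - 1) * Δ :=
    hIJ ▸ G.card_le_card_mul_of_forall_exists_adj (fun w _ => hdeg w)
      fun v hv => hdom v (mem_filter.1 hv).2
  by_contra! hbq
  have := two_mul_pred_mul_lt_mul_of_lt hb hbq hn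
  linarith [mul_comm n b]

/-- If the parts have size ≥ n > 2Δ(1 − 1/(q−1)), I induces a perfect matching, and a
component J of the contracted forest consists of b parts such that I ∩ V_J has exactly
2(b−1) vertices and dominates all vertices lying in the parts of J, then b ≥ q. -/
theorem stmt19 {V : Type} [Fintype V] [DecidableEq V] (r q b n Δ : ℕ)
    (hq : 2 ≤ q) (hb : 1 ≤ b)
    (G : SimpleGraph V) (part : V → Fin r)
    (hpartite : ∀ v w, G.Adj v w → part v ≠ part w)
    (hdeg : ∀ v, (G.neighborSet v).ncard ≤ Δ)
    (hsize : ∀ i : Fin r, n ≤ ({v | part v = i} : Set V).ncard)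
    (hn : (n : ℝ) > 2 * Δ * (1 - 1 / ((q : ℝ) - 1)))
    (I : Finset V)
    (hmatch : ∀ v ∈ I, ∃! w, w ∈ I ∧ G.Adj v w)
    (J : Finset (Fin r)) (hJ : J.card = b)
    (hIJ : (I.filter (fun v => part v ∈ J)).card = 2 * (b - 1))
    (hdom : ∀ v : V, part v ∈ J → ∃ w ∈ I.filter (fun v => part v ∈ J), G.Adj v w) :
    q ≤ b :=
  stmt19_general r q b n Δ hb G part hdeg hsize hn I J hJ hIJ hdom
end
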